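/- arXiv:1806.04267 — 2 statements merged into one kernel-verified Lean document; each statement's English description precedes it below -/
import Mathlib

section
/- Let q ≥ 2 and k ≥ 1 be integers, let Q ≥ 1 be an integer coprime to q−1, and let r_0, …, r_{k−1} ∈ {0,1,…,Q−1}. Then the lower limit, as N → ∞, of (1/N²)·#{ (n,m) ∈ ℕ² : m ≥ 1, n + (k−1)m < N, and s_q(n + jm) ≡ r_j (mod Q) for every 0 ≤ j < k } is strictly positive. In particular such an arithmetic progression n, n+m, …, n+(k−1)m exists. -/
open Finset Complex

noncomputable section

/-- A sequence is `q`-multiplicative if `f (m + n) = f m * f n` whenever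
`m < q ^ t` and `q ^ t ∣ n`. -/
def QMult (q : ℕ) (f : ℕ → ℂ) : Prop :=
  ∀ t m n : ℕ, m < q ^ t → q ^ t ∣ n → f (m + n) = f m * f n

/-- `e x = exp (2 π i x)`. -/
def e (x : ℝ) : ℂ := Complex.exp (2 * Real.pi * Complex.I * x)

/-- The weight `|ω|` of `ω ∈ {0,1}^s`: the number of coordinates equal to `1`. -/
def wt {s : ℕ} (ω : Fin s → Bool) : ℕ := (Finset.univ.filter fun i => ω i = true).card

/-- The vertex `n₀ + ω₁ n₁ + ⋯ + ω_s n_s` of a parallelepiped. -/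
def vertex (s : ℕ) (n : Fin (s + 1) → ℤ) (ω : Fin s → Bool) : ℤ :=
  n 0 + ∑ i : Fin s, if ω i then n i.succ else 0

/-- The set `Π_s(N)` of (s+1)-tuples all of whose associated vertices lie in `[0, N)`.
(Any such tuple automatically has all entries in `[-N, N]`.) -/
def PiSet (s N : ℕ) : Finset (Fin (s + 1) → ℤ) :=
  (Finset.Icc (fun _ => -(N : ℤ)) fun _ => (N : ℤ)).filter fun n =>
    ∀ ω : Fin s → Bool, 0 ≤ vertex s n ω ∧ vertex s n ω < N

/-- The Gowers product `∏_ω conj^{|ω|} f(n₀ + ω·n)`. -/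
def gowersTerm (s : ℕ) (f : ℕ → ℂ) (n : Fin (s + 1) → ℤ) : ℂ :=
  ∏ ω : Fin s → Bool, (starRingEnd ℂ)^[wt ω] (f (vertex s n ω).toNat)

/-- The Gowers average `‖f‖_{U^s[N]}^{2^s}` (as a complex number; it is in fact
real and nonnegative). -/
def gowersAvg (s N : ℕ) (f : ℕ → ℂ) : ℂ :=
  (∑ n ∈ PiSet s N, gowersTerm s f n) / (PiSet s N).card

/-- The Gowers uniformity norm `‖f‖_{U^s[N]}`. -/
def gowersNorm (s N : ℕ) (f : ℕ → ℂ) : ℝ :=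
  (gowersAvg s N f).re ^ ((1 : ℝ) / 2 ^ s)

/-- Sum of digits of `n` in base `q`. -/
def digitSum (q n : ℕ) : ℕ := (Nat.digits q n).sum

end

/-!
Digit sums add when digit blocks are concatenated, so the patterns `(s_q(u + j w) mod Q)_{j < k}`
realized by progressions form an additive submonoid of `(ZMod Q)^k`, hence a subgroup. Replacing
`P` by `P + s` in the progression `q^P - t, q^P - t + 1, …` changes its pattern by `s (q - 1)` on
the first `t` terms only; since `q - 1` is a unit mod `Q`, every prefix pattern, and so every
pattern, is realized, all within a uniform number `T` of digits. Placing, above the lowest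
`E + k + 1` digits of `b, b + (c + 1), …` (`b, c < q^E`), a progression realizing `r` minus their
pattern gives `q^{2E}` distinct admissible pairs below `q^{E + k + 1 + T}`, hence density at
least `q^{-2(k + 2 + T)}`.
-/

open Finset Filter

lemma add_pow_mul_lt_pow {q a b s t : ℕ} (ha : a < q ^ s) (hb : b < q ^ t) :
    a + q ^ s * b < q ^ (s + t) := by
  rw [pow_add]
  nlinarith

lemma digitSum_of_lt {q a : ℕ} (ha : a < q) : digitSum q a = a := by
  rcases Nat.eq_zero_or_pos a with rfl | ha0
  · simp [digitSum]
  · simp [digitSum, Nat.digits_of_lt q a ha0.ne' ha]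

lemma digitSum_add_pow_mul {q a t : ℕ} (ha : a < q ^ t) (m : ℕ) :
    digitSum q (a + q ^ t * m) = digitSum q a + digitSum q m := by
  rcases Nat.lt_or_ge q 2 with hq | hq
  · interval_cases q
    · rcases t with _ | t <;> simp_all [digitSum]
    · simp_all [digitSum]
  rcases Nat.eq_zero_or_pos m with rfl | hm
  · simp [digitSum]
  obtain ⟨d, rfl⟩ : ∃ d, t = (Nat.digits q a).length + d :=
    Nat.exists_eq_add_of_le ((Nat.digits_length_le_iff hq a).2 ha)
  simp [digitSum, ← Nat.digits_append_zeroes_append_digits hq hm]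

lemma digitSum_pow_sub_one {q : ℕ} (hq : 0 < q) (s : ℕ) :
    digitSum q (q ^ s - 1) = s * (q - 1) := by
  induction s with
  | zero => simp [digitSum]
  | succ s ih =>
    have hsplit : q ^ (s + 1) - 1 = (q - 1) + q ^ 1 * (q ^ s - 1) := by
      have : 0 < q ^ s := Nat.pow_pos hq
      have : 0 < q ^ (s + 1) := Nat.pow_pos hq
      zify [*, Nat.one_le_iff_ne_zero.2 hq.ne']
      ring
    rw [hsplit, digitSum_add_pow_mul (by simpa using Nat.sub_lt hq one_pos),
      digitSum_of_lt (by omega), ih]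
    ring

lemma AddSubmonoid.neg_mem_of_finite {G : Type*} [AddGroup G] [Finite G] (S : AddSubmonoid G)
    {x : G} (hx : x ∈ S) : -x ∈ S := by
  have hx' : (Nat.card G - 1) • x + x = 0 := by
    rw [← succ_nsmul, Nat.sub_add_cancel Nat.card_pos, card_nsmul_eq_zero']
  rw [neg_eq_of_add_eq_zero_left hx']
  exact S.nsmul_mem hx _

section Patterns

variable {q k Q : ℕ}

def RealizedBelow (q T : ℕ) (v : Fin k → ZMod Q) : Prop :=
  ∃ u w, u + (k - 1) * w < q ^ T ∧ w < q ^ T ∧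
    ∀ j : Fin k, (digitSum q (u + j * w) : ZMod Q) = v j

lemma RealizedBelow.mono {T T' : ℕ} {v : Fin k → ZMod Q} (hv : RealizedBelow q T v) (hq : 0 < q)
    (hT : T ≤ T') : RealizedBelow q T' v := by
  obtain ⟨u, w, hu, hw, hv⟩ := hv
  have := Nat.pow_le_pow_right hq hT
  exact ⟨u, w, by omega, by omega, hv⟩

/-- Concatenating the digits of two progressions adds their patterns. -/
lemma RealizedBelow.add {T T' : ℕ} {v v' : Fin k → ZMod Q} (hv : RealizedBelow q T v)
    (hv' : RealizedBelow q T' v') : RealizedBelow q (T + T') (v + v') := by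
  obtain ⟨u, w, hu, hw, hv⟩ := hv
  obtain ⟨u', w', hu', hw', hv'⟩ := hv'
  refine ⟨u + q ^ T * u', w + q ^ T * w', ?_, ?_, fun j => ?_⟩
  · convert add_pow_mul_lt_pow hu hu' using 1
    ring
  · exact add_pow_mul_lt_pow hw hw'
  · have hj : u + j * w < q ^ T := by
      have : (j : ℕ) * w ≤ (k - 1) * w := Nat.mul_le_mul_right _ (by omega)
      omega
    have hsplit :
        u + q ^ T * u' + j * (w + q ^ T * w') = (u + j * w) + q ^ T * (u' + j * w') := by
      ring
    rw [hsplit, digitSum_add_pow_mul hj, Nat.cast_add, hv, hv', Pi.add_apply]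

variable (q k Q) in
def realizablePatterns : AddSubmonoid (Fin k → ZMod Q) where
  carrier := {v | ∃ T, RealizedBelow q T v}
  zero_mem' := ⟨0, 0, 0, by simp, by simp, fun j => by simp [digitSum]⟩
  add_mem' := fun ⟨_, hv⟩ ⟨_, hv'⟩ => ⟨_, hv.add hv'⟩

def blockPattern (q Q P t : ℕ) : Fin k → ZMod Q :=
  fun j => (digitSum q (q ^ P - t + j) : ZMod Q)

def prefixPattern (t : ℕ) (c : ZMod Q) : Fin k → ZMod Q :=
  fun j => if (j : ℕ) < t then c else 0

lemma blockPattern_mem {P t : ℕ} (hq : 1 < q) (hk : k ≤ q ^ P) :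
    blockPattern q Q P t ∈ realizablePatterns q k Q := by
  have hP : 0 < q ^ P := by positivity
  have hP1 : 2 * q ^ P ≤ q ^ (P + 1) := by rw [pow_succ]; nlinarith
  refine ⟨P + 1, q ^ P - t, 1, ?_, by omega, fun j => by simp [blockPattern]⟩
  omega

/-- For `j < t`, `q ^ (P + s) - t + j` is `q ^ P - t + j` with `s` more digits `q - 1` on top;
for `j ≥ t` both terms are `q ^ _ + (j - t)`. -/
lemma blockPattern_add {P t : ℕ} (hq : 0 < q) (htk : t ≤ k) (hk : k ≤ q ^ P) (s : ℕ) :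
    (blockPattern q Q (P + s) t : Fin k → ZMod Q) =
      blockPattern q Q P t + prefixPattern t ((s * (q - 1) : ℕ) : ZMod Q) := by
  ext j
  simp only [blockPattern, prefixPattern, Pi.add_apply]
  have hPs : q ^ (P + s) = q ^ P + q ^ P * (q ^ s - 1) := by
    have : 0 < q ^ s := Nat.pow_pos hq
    rw [pow_add, Nat.mul_sub, mul_one]
    have : q ^ P ≤ q ^ P * q ^ s := Nat.le_mul_of_pos_right _ this
    omega
  split_ifs with hjt
  · have hlt : q ^ P - t + j < q ^ P := by omega
    rw [show q ^ (P + s) - t + j = (q ^ P - t + j) + q ^ P * (q ^ s - 1) by omega,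
      digitSum_add_pow_mul hlt, digitSum_pow_sub_one hq, Nat.cast_add]
  · have hlt : (j : ℕ) - t < q ^ P := by omega
    have hlt' : (j : ℕ) - t < q ^ (P + s) := hlt.trans_le (Nat.pow_le_pow_right hq (by omega))
    rw [show q ^ (P + s) - t + j = (j - t) + q ^ (P + s) * 1 by omega,
      show q ^ P - t + j = (j - t) + q ^ P * 1 by omega,
      digitSum_add_pow_mul hlt, digitSum_add_pow_mul hlt', add_zero]

lemma prefixPattern_mem [NeZero Q] {t : ℕ} (hq : 1 < q) (hcop : Nat.Coprime Q (q - 1))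
    (ht : t ≤ k) (c : ZMod Q) : prefixPattern t c ∈ realizablePatterns q k Q := by
  let u := ZMod.unitOfCoprime (q - 1) hcop.symm
  obtain ⟨s, hs⟩ : ∃ s : ℕ, ((s * (q - 1) : ℕ) : ZMod Q) = c :=
    ⟨(c * ↑u⁻¹).val, by
      rw [Nat.cast_mul, ZMod.natCast_zmod_val, ← ZMod.coe_unitOfCoprime (q - 1) hcop.symm,
        mul_assoc, Units.inv_mul, mul_one]⟩
  have hk : k ≤ q ^ k := (Nat.lt_pow_self hq).le
  have hdiff := blockPattern_add (Q := Q) (t := t) (by omega) ht hk s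
  rw [hs, ← sub_eq_iff_eq_add'] at hdiff
  rw [← hdiff, sub_eq_add_neg]
  exact add_mem (blockPattern_mem hq (hk.trans (Nat.pow_le_pow_right (by omega) (by omega))))
    ((realizablePatterns q k Q).neg_mem_of_finite (blockPattern_mem hq hk))

lemma realizablePatterns_eq_top [NeZero Q] (hq : 1 < q) (hcop : Nat.Coprime Q (q - 1)) :
    realizablePatterns q k Q = ⊤ := by
  refine eq_top_iff.2 fun v _ => ?_
  have hsingle : ∀ j : Fin k,
      Pi.single j (v j) = prefixPattern (j + 1) (v j) + prefixPattern j (-v j) := by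
    intro j
    ext i
    simp only [Pi.single_apply, prefixPattern, Pi.add_apply, Fin.ext_iff]
    split_ifs <;> first | omega | simp
  rw [← Finset.univ_sum_single v]
  refine sum_mem fun j _ => ?_
  rw [hsingle]
  exact add_mem (prefixPattern_mem hq hcop (by omega) _) (prefixPattern_mem hq hcop (by omega) _)

lemma exists_forall_realizedBelow [NeZero Q] (hq : 1 < q) (hcop : Nat.Coprime Q (q - 1)) :
    ∃ T, ∀ v : Fin k → ZMod Q, RealizedBelow q T v := by
  refine (eventually_all.2 fun v => ?_).exists (f := atTop)
  obtain ⟨T, hT⟩ : v ∈ realizablePatterns q k Q := by simp [realizablePatterns_eq_top hq hcop]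
  exact eventually_atTop.2 ⟨T, fun T' hT' => hT.mono (by omega) hT'⟩

end Patterns

section Counting

variable (q k Q : ℕ) (r : ℕ → ℕ)

def apPatternPairs (N : ℕ) : Finset (ℕ × ℕ) :=
  (Finset.range N ×ˢ Finset.range N).filter fun nm : ℕ × ℕ =>
    1 ≤ nm.2 ∧ nm.1 + (k - 1) * nm.2 < N ∧ ∀ j < k, digitSum q (nm.1 + j * nm.2) % Q = r j

lemma apPatternPairs_mono : Monotone (apPatternPairs q k Q r) := by
  intro N M hNM nm
  simp only [apPatternPairs, mem_filter, mem_product, mem_range]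
  rintro ⟨⟨hn, hm⟩, hm₁, hlast, hdig⟩
  exact ⟨⟨by omega, by omega⟩, hm₁, by omega, hdig⟩

lemma card_apPatternPairs_le (N : ℕ) : #(apPatternPairs q k Q r N) ≤ N ^ 2 :=
  (card_filter_le _ _).trans (by simp [sq])

variable {q k Q r}

lemma mem_apPatternPairs_of_digitSum {n₀ m₀ u w E T : ℕ} (hr : ∀ j < k, r j < Q)
    (hn₀ : n₀ + (k - 1) * m₀ < q ^ E) (hm₀ : m₀ < q ^ E) (hm₀_pos : 1 ≤ m₀)
    (hu : u + (k - 1) * w < q ^ T) (hw : w < q ^ T)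
    (hdig : ∀ j < k, (digitSum q (n₀ + j * m₀) : ZMod Q) + digitSum q (u + j * w) = r j) :
    (n₀ + q ^ E * u, m₀ + q ^ E * w) ∈ apPatternPairs q k Q r (q ^ (E + T)) := by
  have hsplit (j : ℕ) :
      n₀ + q ^ E * u + j * (m₀ + q ^ E * w) = (n₀ + j * m₀) + q ^ E * (u + j * w) := by
    ring
  have hlast := add_pow_mul_lt_pow hn₀ hu
  rw [← hsplit] at hlast
  simp only [apPatternPairs, mem_filter, mem_product, mem_range]
  refine ⟨⟨by omega, add_pow_mul_lt_pow hm₀ hw⟩, by omega, hlast, fun j hj => ?_⟩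
  have hjm : j * m₀ ≤ (k - 1) * m₀ := Nat.mul_le_mul_right _ (by omega)
  rw [hsplit, digitSum_add_pow_mul (by omega), ← Nat.mod_eq_of_lt (hr j hj),
    ← ZMod.natCast_eq_natCast_iff', Nat.cast_add, hdig j hj]

/-- The injection `(b, c) ↦ (b + q ^ D u, c + 1 + q ^ D w)`, where `(u, w)` realizes `r` minus the
digit-sum pattern of `b, b + (c + 1), …, b + (k - 1) (c + 1)`. -/
lemma sq_pow_le_card_apPatternPairs (hq : 1 < q) (hr : ∀ j < k, r j < Q) {T : ℕ}
    (hT : ∀ v : Fin k → ZMod Q, RealizedBelow q T v) (E : ℕ) :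
    (q ^ E) ^ 2 ≤ #(apPatternPairs q k Q r (q ^ (E + (k + 1 + T)))) := by
  choose u w hu hw hdig using hT
  set D := E + k + 1
  let v : ℕ × ℕ → Fin k → ZMod Q := fun bc j => r j - digitSum q (bc.1 + j * (bc.2 + 1))
  let φ : ℕ × ℕ → ℕ × ℕ :=
    fun bc => (bc.1 + q ^ D * u (v bc), bc.2 + 1 + q ^ D * w (v bc))
  have hD : (k + 2) * q ^ E ≤ q ^ D := by
    rw [show D = E + (k + 1) by omega, pow_add, mul_comm]
    exact Nat.mul_le_mul_left _ (Nat.lt_pow_self hq)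
  have hsmall : ∀ bc ∈ range (q ^ E) ×ˢ range (q ^ E),
      bc.1 + (k - 1) * (bc.2 + 1) < q ^ D ∧ bc.2 + 1 < q ^ D := by
    rintro ⟨b, c⟩ hbc
    simp only [mem_product, mem_range] at hbc
    have : (k - 1) * (c + 1) ≤ k * q ^ E := Nat.mul_le_mul (Nat.sub_le k 1) hbc.2
    constructor <;> nlinarith
  rw [show E + (k + 1 + T) = D + T by omega, sq, ← card_range (q ^ E), ← card_product]
  refine card_le_card_of_injOn φ (fun bc hbc => ?_) (fun bc hbc bc' hbc' heq => ?_)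
  · refine mem_apPatternPairs_of_digitSum hr (hsmall bc hbc).1 (hsmall bc hbc).2 (by omega)
      (hu _) (hw _) fun j hj => ?_
    rw [hdig (v bc) ⟨j, hj⟩]
    exact add_sub_cancel _ _
  · obtain ⟨hb, hc⟩ := hsmall bc hbc
    obtain ⟨hb', hc'⟩ := hsmall bc' hbc'
    have h₁ := congrArg (· % q ^ D) (congrArg Prod.fst heq)
    have h₂ := congrArg (· % q ^ D) (congrArg Prod.snd heq)
    simp only [φ, Nat.add_mul_mod_self_left] at h₁ h₂
    rw [Nat.mod_eq_of_lt (by omega), Nat.mod_eq_of_lt (by omega)] at h₁ h₂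
    exact Prod.ext h₁ (by omega)

end Counting

lemma liminf_div_sq_pos {g : ℕ → ℕ} (hg : Monotone g) (hgN : ∀ N, g N ≤ N ^ 2) {q c : ℕ}
    (hq : 1 < q) (h : ∀ E, (q ^ E) ^ 2 ≤ g (q ^ (E + c))) :
    0 < liminf (fun N => (g N : ℝ) / N ^ 2) atTop := by
  have hε : (0 : ℝ) < 1 / ((q : ℝ) ^ (c + 1)) ^ 2 := by positivity
  have hbdd : ∀ N, (g N : ℝ) / N ^ 2 ≤ 1 := fun N =>
    div_le_one_of_le₀ (by exact_mod_cast hgN N) (by positivity)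
  refine hε.trans_le (le_liminf_of_le
    (isCoboundedUnder_ge_of_eventually_le atTop (Eventually.of_forall hbdd)) ?_)
  filter_upwards [eventually_ge_atTop (q ^ c)] with N hN
  have hN0 : N ≠ 0 := (Nat.pos_of_ne_zero (pow_ne_zero c (by omega))).trans_le hN |>.ne'
  obtain ⟨E, hE⟩ : ∃ E, Nat.log q N = E + c := ⟨Nat.log q N - c, by
    have := Nat.le_log_of_pow_le hq hN; omega⟩
  have hlow : (q ^ E) ^ 2 ≤ g N := (h E).trans (hg (hE ▸ Nat.pow_log_le_self q hN0))
  have hup : N < q ^ E * q ^ (c + 1) := by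
    simpa [← pow_add, hE, add_assoc] using Nat.lt_pow_succ_log_self hq N
  rw [div_le_div_iff₀ (by positivity) (by positivity)]
  calc (1 : ℝ) * N ^ 2 ≤ ((q : ℝ) ^ E * (q : ℝ) ^ (c + 1)) ^ 2 := by
        rw [one_mul]; gcongr; exact_mod_cast hup.le
    _ = ((q ^ E) ^ 2 : ℕ) * ((q : ℝ) ^ (c + 1)) ^ 2 := by push_cast; ring
    _ ≤ g N * ((q : ℝ) ^ (c + 1)) ^ 2 := by gcongr

theorem stmt5_general (q : ℕ) (hq : 2 ≤ q) (k : ℕ) (Q : ℕ) (hQ : 1 ≤ Q)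
    (hcop : Nat.Coprime Q (q - 1)) (r : ℕ → ℕ) (hr : ∀ j < k, r j < Q) :
    0 < Filter.atTop.liminf (fun N : ℕ =>
      (((Finset.range N ×ˢ Finset.range N).filter fun nm : ℕ × ℕ =>
          1 ≤ nm.2 ∧ nm.1 + (k - 1) * nm.2 < N ∧
          ∀ j < k, digitSum q (nm.1 + j * nm.2) % Q = r j).card : ℝ)
        / (N : ℝ) ^ 2) := by
  have : NeZero Q := ⟨by omega⟩
  obtain ⟨T, hT⟩ := exists_forall_realizedBelow (k := k) hq hcop
  exact liminf_div_sq_pos (g := fun N => #(apPatternPairs q k Q r N))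
    (card_mono.comp (apPatternPairs_mono q k Q r)) (card_apPatternPairs_le q k Q r) hq
    (sq_pow_le_card_apPatternPairs hq hr hT)

/-- For `Q` coprime to `q - 1`, the residues of `s_q(n+jm)` mod `Q`
hit any prescribed pattern along arithmetic progressions of length `k`, with positive
density of pairs `(n, m)`. -/
theorem stmt5 (q : ℕ) (hq : 2 ≤ q) (k : ℕ) (hk : 1 ≤ k) (Q : ℕ) (hQ : 1 ≤ Q)
    (hcop : Nat.Coprime Q (q - 1)) (r : ℕ → ℕ) (hr : ∀ j < k, r j < Q) :
    0 < Filter.atTop.liminf (fun N : ℕ =>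
      (((Finset.range N ×ˢ Finset.range N).filter fun nm : ℕ × ℕ =>
          1 ≤ nm.2 ∧ nm.1 + (k - 1) * nm.2 < N ∧
          ∀ j < k, digitSum q (nm.1 + j * nm.2) % Q = r j).card : ℝ)
        / (N : ℝ) ^ 2) :=
  stmt5_general q hq k Q hQ hcop r hr
end

section
/- For all integers q ≥ 2 and s ≥ 2 there exist constants ε₀ > 0, δ₀ > 0, an integer L₀ > 0, and constants C₁, C₂ > 0 such that the following holds. Suppose f : ℕ → ℂ is q-multiplicative with |f(n)| = 1 for all n, p is a real polynomial of degree < s, 0 < ε < ε₀, 0 < δ < δ₀, L ≥ L₀ is an integer, and for δ-almost all n < q^L there exists θ_n ∈ ℝ with |θ_n| ≤ ε and f(n) = e(p(n) + θ_n). Then there exist α, β ∈ ℝ and a polynomial b with rational coefficients such that the sequence n ↦ b(n) mod 1 is periodic with some period that is a power of q not exceeding q^{C₁}, and for δ-almost all n < q^L there exists θ'_n ∈ ℝ with |θ'_n| ≤ C₂·ε and f(n) = e(αn + β + b(n) + θ'_n). -/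
open Finset Complex

/-!
Induction on the degree, with the phase twisted by a rational polynomial `b₀` that is
periodic mod 1 with period `q ^ M`. Let the real part `P` of the phase have degree `d + 1 ≥ 2`
and leading coefficient `c`. For a scale `t ≥ M`, counting finds a base point `n` whose digits
at positions `t, …, t + d` vanish and such that all vertices `n + ∑_{i ∈ S} q ^ (t + i)` of the
cube are good. There `q`-multiplicativity gives `f (v + q ^ t) = f (q ^ t) * f v`, so the
difference of the phase in direction `q ^ t` is constant mod 1 up to `2 ε`, and the remaining
`d ≥ 1` differences kill the constant: `(d + 1)! c q ^ E(t)`, where `E(t) = t + ⋯ + (t + d)`,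
is within `2 ^ (d + 1) ε` of an integer. As `E(t + 1) = E(t) + d + 1`, chaining the scales
`M ≤ t ≤ L - d - 1` puts `(d + 1)! c q ^ E(M)` within `2 ^ (d + 1) ε q ^ (-(d + 1)(L - M - d - 1))`
of an integer `z`. Moving `z (X choose (d + 1)) / q ^ E(M)` into `b₀` keeps it periodic mod 1,
now with period `q ^ (E(M) + d + 1)` since `q ^ a ∣ (q ^ t).choose j` for `t ≥ a + j`; it costs
`O(ε)` on `[0, q ^ L)` and lowers the degree of `P`. In degree one the phase is `α n + β + b₀ n`.
-/

open Polynomial fwdDiff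

lemma e_add (x y : ℝ) : e (x + y) = e x * e y := by
  simp only [e, Complex.ofReal_add, mul_add, Complex.exp_add]

lemma e_eq_e_iff {x y : ℝ} : e x = e y ↔ ∃ z : ℤ, x = y + z := by
  have h2pi : (2 * Real.pi * Complex.I : ℂ) ≠ 0 := by simp [Real.pi_ne_zero]
  simp only [e, Complex.exp_eq_exp_iff_exists_int]
  refine exists_congr fun z => ⟨fun h => ?_, fun h => by rw [h]; push_cast; ring⟩
  have : ((x : ℂ) - (y + z)) * (2 * Real.pi * Complex.I) = 0 := by linear_combination h
  exact_mod_cast sub_eq_zero.mp ((mul_eq_zero.mp this).resolve_right h2pi)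

lemma exists_eq_e_of_norm_eq_one {w : ℂ} (hw : ‖w‖ = 1) : ∃ κ : ℝ, w = e κ := by
  obtain ⟨θ, rfl⟩ := (Complex.norm_eq_one_iff w).mp hw
  refine ⟨θ / (2 * Real.pi), ?_⟩
  simp only [e]
  congr 1
  push_cast
  field_simp

lemma exists_int_abs_sub_le_of_e_eq {x y θ θ' : ℝ} (h : e (x + θ) = e (y + θ')) :
    ∃ z : ℤ, |x - y - z| ≤ |θ| + |θ'| := by
  obtain ⟨z, hz⟩ := e_eq_e_iff.mp h
  refine ⟨z, ?_⟩
  rw [show x - y - z = θ' - θ by linarith]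
  exact (abs_sub _ _).trans_eq (add_comm _ _)

lemma QMult.apply_add_pow {q : ℕ} {f : ℕ → ℂ} (hf : QMult q f) (hq : 2 ≤ q) {a t : ℕ}
    (ha : a < q ^ t) (w : ℕ) :
    f (a + q ^ (t + 1) * w + q ^ t) = f (q ^ t) * f (a + q ^ (t + 1) * w) := by
  have hpow : q ^ t * 2 ≤ q ^ (t + 1) := by rw [pow_succ]; exact Nat.mul_le_mul_left _ hq
  have hlt : a < q ^ (t + 1) := by omega
  rw [show a + q ^ (t + 1) * w + q ^ t = a + q ^ t + q ^ (t + 1) * w by ring,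
    hf (t + 1) _ _ (by omega) (dvd_mul_right _ _), hf t a (q ^ t) ha dvd_rfl,
    hf (t + 1) a _ hlt (dvd_mul_right _ _)]
  ring

lemma Finset.exists_forall_notMem_of_card_mul_lt {α β ι : Type*} {s : Finset α} {I : Finset ι}
    {B : Finset β} (g : ι → α → β) (hg : ∀ i ∈ I, Set.InjOn (g i) s) (h : #I * #B < #s) :
    ∃ x ∈ s, ∀ i ∈ I, g i x ∉ B := by
  classical
  by_contra! H
  have hcover : s ⊆ I.biUnion fun i => s.filter fun x => g i x ∈ B := fun x hx => by
    obtain ⟨i, hi, hx'⟩ := H x hx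
    exact mem_biUnion.mpr ⟨i, hi, mem_filter.mpr ⟨hx, hx'⟩⟩
  have hfiber : ∀ i ∈ I, #(s.filter fun x => g i x ∈ B) ≤ #B := fun i hi =>
    card_le_card_of_injOn (g i) (fun x hx => (mem_filter.mp hx).2)
      ((hg i hi).mono (filter_subset _ s))
  have := (card_le_card hcover).trans (card_biUnion_le.trans (sum_le_card_nsmul _ _ _ hfiber))
  rw [smul_eq_mul] at this
  omega

section IterFwdDiff

variable {M G : Type*} [AddCommMonoid M] [AddCommGroup G]

def iterFwdDiff (hs : List M) (F : M → G) : M → G :=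
  hs.foldl (fun F h => Δ_[h] F) F

@[simp] lemma iterFwdDiff_nil (F : M → G) : iterFwdDiff [] F = F := rfl

@[simp] lemma iterFwdDiff_cons (h : M) (hs : List M) (F : M → G) :
    iterFwdDiff (h :: hs) F = iterFwdDiff hs (Δ_[h] F) := rfl

lemma iterFwdDiff_add (hs : List M) (F F' : M → G) :
    iterFwdDiff hs (F + F') = iterFwdDiff hs F + iterFwdDiff hs F' := by
  induction hs generalizing F F' with
  | nil => rfl
  | cons h hs ih => simp only [iterFwdDiff_cons, fwdDiff_add, ih]

lemma iterFwdDiff_const {hs : List M} (hs_ne : hs ≠ []) (g : G) :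
    iterFwdDiff hs (fun _ => g) = 0 := by
  obtain ⟨h, hs, rfl⟩ := List.exists_cons_of_ne_nil hs_ne
  rw [iterFwdDiff_cons, fwdDiff_const]
  clear hs_ne h
  induction hs with
  | nil => rfl
  | cons h hs ih => rwa [iterFwdDiff_cons, fwdDiff_const]

lemma exists_int_abs_iterFwdDiff_sub_le {F : M → ℝ} {a : ℝ} (hs : List M) (n : M)
    (h : ∀ l : List M, l.Sublist hs → ∃ z : ℤ, |F (n + l.sum) - z| ≤ a) :
    ∃ z : ℤ, |iterFwdDiff hs F n - z| ≤ 2 ^ hs.length * a := by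
  induction hs generalizing F a with
  | nil => simpa using h [] (List.Sublist.refl [])
  | cons h₀ hs ih =>
    obtain ⟨z, hz⟩ := ih (F := Δ_[h₀] F) (a := 2 * a) fun l hl => by
      obtain ⟨z₁, hz₁⟩ := h (h₀ :: l) (hl.cons_cons h₀)
      obtain ⟨z₂, hz₂⟩ := h l (hl.cons h₀)
      refine ⟨z₁ - z₂, ?_⟩
      rw [List.sum_cons, ← add_assoc] at hz₁
      calc |Δ_[h₀] F (n + l.sum) - ↑(z₁ - z₂)|
          = |(F (n + l.sum + h₀) - z₁) - (F (n + l.sum) - z₂)| := by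
            rw [fwdDiff, add_right_comm n]; push_cast; ring_nf
        _ ≤ a + a := (abs_sub _ _).trans (add_le_add (by rwa [add_right_comm]) hz₂)
        _ = 2 * a := by ring
    exact ⟨z, by rw [iterFwdDiff_cons, List.length_cons, pow_succ]; linarith⟩

lemma exists_int_iterFwdDiff_eq {F : M → ℝ} (hF : ∀ v, ∃ z : ℤ, F v = z) (hs : List M) (n : M) :
    ∃ z : ℤ, iterFwdDiff hs F n = z := by
  obtain ⟨z, hz⟩ := exists_int_abs_iterFwdDiff_sub_le (F := F) (a := 0) hs n fun l _ =>
    (hF (n + l.sum)).imp fun z hz => by simp [hz]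
  exact ⟨z, by simpa [sub_eq_zero] using hz⟩

end IterFwdDiff

section PolynomialDifferences

variable {R : Type*} [CommRing R]

lemma coeff_taylor_sub_self (h : R) (P : R[X]) (i : ℕ) :
    (taylor h P - P).coeff i = (hasseDeriv i P).eval h - P.coeff i := by
  rw [coeff_sub, taylor_coeff]

lemma natDegree_taylor_sub_self_le (h : R) {P : R[X]} {r : ℕ} (hP : P.natDegree ≤ r + 1) :
    (taylor h P - P).natDegree ≤ r := by
  refine natDegree_le_iff_coeff_eq_zero.mpr fun i hi => ?_
  have hdeg : (hasseDeriv i P).natDegree ≤ 0 := (natDegree_hasseDeriv_le P i).trans (by omega)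
  rw [coeff_taylor_sub_self, eq_C_of_natDegree_le_zero hdeg, eval_C, hasseDeriv_coeff,
    zero_add, Nat.choose_self, Nat.cast_one, one_mul, sub_self]

lemma coeff_taylor_sub_self_of_natDegree_le (h : R) {P : R[X]} {r : ℕ}
    (hP : P.natDegree ≤ r + 1) : (taylor h P - P).coeff r = (r + 1) * h * P.coeff (r + 1) := by
  have hdeg : (hasseDeriv r P).natDegree ≤ 1 := (natDegree_hasseDeriv_le P r).trans (by omega)
  rw [coeff_taylor_sub_self, eq_X_add_C_of_natDegree_le_one hdeg]
  simp only [eval_add, eval_mul, eval_C, eval_X, hasseDeriv_coeff, Nat.choose_self,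
    Nat.choose_succ_self_right, zero_add, add_comm 1 r]
  push_cast
  ring

lemma iterFwdDiff_eval (hs : List ℕ) {P : R[X]} (hP : P.natDegree ≤ hs.length) (n : ℕ) :
    iterFwdDiff hs (fun v : ℕ => P.eval (v : R)) n
      = P.coeff hs.length * hs.length.factorial * hs.prod := by
  induction hs generalizing P with
  | nil =>
    have hC := eq_C_of_natDegree_le_zero (p := P) (by simpa using hP)
    rw [iterFwdDiff_nil, hC]
    simp
  | cons h hs ih =>
    have hΔ : Δ_[h] (fun v : ℕ => P.eval (v : R))
        = fun v : ℕ => (taylor (h : R) P - P).eval (v : R) := by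
      ext v
      simp [fwdDiff, taylor_eval]
    rw [iterFwdDiff_cons, hΔ, ih (natDegree_taylor_sub_self_le _ hP),
      coeff_taylor_sub_self_of_natDegree_le _ hP, List.length_cons, Nat.factorial_succ,
      List.prod_cons]
    push_cast
    ring

end PolynomialDifferences

section Cubes

variable {q : ℕ}

def powSteps (q t k : ℕ) : List ℕ := (List.range' t k).map (q ^ ·)

lemma powSteps_succ (t k : ℕ) : powSteps q t (k + 1) = q ^ t :: powSteps q (t + 1) k := rfl

@[simp] lemma length_powSteps (t k : ℕ) : (powSteps q t k).length = k := by
  simp [powSteps]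

lemma prod_powSteps (t k : ℕ) : (powSteps q t k).prod = q ^ (List.range' t k).sum := by
  induction k generalizing t with
  | zero => rfl
  | succ k ih => rw [powSteps_succ, List.prod_cons, ih, List.range'_succ, List.sum_cons, pow_add]

lemma sum_range'_add (M j k : ℕ) : (List.range' (M + j) k).sum = (List.range' M k).sum + k * j := by
  rw [List.sum_range', List.sum_range']
  ring

lemma mul_le_sum_range' (M k : ℕ) : k * M ≤ (List.range' M k).sum := by
  rw [List.sum_range']
  omega

lemma dvd_sum_and_sum_add_le_of_sublist_powSteps (hq : 2 ≤ q) {t k : ℕ} {l : List ℕ}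
    (hl : l.Sublist (powSteps q t k)) : q ^ t ∣ l.sum ∧ l.sum + q ^ t ≤ q ^ (t + k) := by
  induction k generalizing t l with
  | zero => simp_all [powSteps]
  | succ k ih =>
    have hpow : q ^ t * 2 ≤ q ^ (t + 1) := by rw [pow_succ]; exact Nat.mul_le_mul_left _ hq
    rw [powSteps_succ, List.sublist_cons_iff] at hl
    rcases hl with hl | ⟨l, rfl, hl⟩
    · obtain ⟨hdvd, hle⟩ := ih hl
      refine ⟨(pow_dvd_pow q (Nat.le_succ t)).trans hdvd, ?_⟩
      rw [show t + (k + 1) = t + 1 + k by ring]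
      have : q ^ t ≤ q ^ (t + 1) := by omega
      omega
    · obtain ⟨hdvd, hle⟩ := ih hl
      rw [List.sum_cons, show t + (k + 1) = t + 1 + k by ring]
      refine ⟨dvd_add dvd_rfl ((pow_dvd_pow q (Nat.le_succ t)).trans hdvd), ?_⟩
      omega

lemma injOn_add_pow_mul_add_sum (hq : 2 ≤ q) {t k : ℕ} {l : List ℕ}
    (hl : l.Sublist (powSteps q t k)) :
    Set.InjOn (fun x : ℕ × ℕ => x.1 + q ^ (t + k) * x.2 + l.sum) {x | x.1 < q ^ t} := by
  rintro ⟨a, c⟩ (ha : a < q ^ t) ⟨a', c'⟩ (ha' : a' < q ^ t) heq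
  obtain ⟨u, hu⟩ := (dvd_sum_and_sum_add_le_of_sublist_powSteps hq hl).1
  have hrepr : ∀ a c, a + q ^ (t + k) * c + l.sum = a + q ^ t * (q ^ k * c + u) := by
    intro a c; rw [hu, pow_add]; ring
  simp only [hrepr] at heq
  have hq0 : 0 < q := by omega
  obtain rfl : a = a' := by
    simpa [Nat.add_mul_mod_self_left, Nat.mod_eq_of_lt ha, Nat.mod_eq_of_lt ha']
      using congrArg (· % q ^ t) heq
  have := Nat.eq_of_mul_eq_mul_left (pow_pos hq0 t) (Nat.add_left_cancel heq)
  rw [Nat.eq_of_mul_eq_mul_left (pow_pos hq0 k) (Nat.add_right_cancel this)]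

lemma exists_cube_avoiding (hq : 2 ≤ q) {bad : Finset ℕ} {δ : ℝ} {L t k : ℕ}
    (hbad : (#bad : ℝ) ≤ δ * q ^ L) (hδ : δ * (2 * q) ^ k < 1) (hL : t + k ≤ L) :
    ∃ a < q ^ t, ∃ c : ℕ, ∀ l : List ℕ, l.Sublist (powSteps q t k) →
      a + q ^ (t + k) * c + l.sum < q ^ L ∧ a + q ^ (t + k) * c + l.sum ∉ bad := by
  classical
  have hL' : q ^ L = q ^ (t + k) * q ^ (L - (t + k)) := by rw [← pow_add]; congr 1; omega
  have hcard : #(powSteps q t k).sublists.toFinset * #bad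
      < #(range (q ^ t) ×ˢ range (q ^ (L - (t + k)))) := by
    have hI : #(powSteps q t k).sublists.toFinset ≤ 2 ^ k :=
      (List.toFinset_card_le _).trans (by simp)
    rw [card_product, card_range, card_range]
    have hLk : (q : ℝ) ^ L = q ^ k * (q ^ t * q ^ (L - (t + k))) := by
      rw [← pow_add, ← pow_add]; congr 1; omega
    have : (#(powSteps q t k).sublists.toFinset : ℝ) * #bad < q ^ t * q ^ (L - (t + k)) :=
      calc _ ≤ (2 : ℝ) ^ k * (δ * q ^ L) := by gcongr; exact_mod_cast hI
        _ = δ * (2 * q) ^ k * (q ^ t * q ^ (L - (t + k))) := by rw [hLk]; ring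
        _ < 1 * (q ^ t * q ^ (L - (t + k))) := by gcongr
        _ = _ := one_mul _
    exact_mod_cast this
  have hinj : ∀ l ∈ (powSteps q t k).sublists.toFinset,
      Set.InjOn (fun x : ℕ × ℕ => x.1 + q ^ (t + k) * x.2 + l.sum)
        ↑(range (q ^ t) ×ˢ range (q ^ (L - (t + k)))) := fun l hl =>
    (injOn_add_pow_mul_add_sum hq (List.mem_sublists.mp (List.mem_toFinset.mp hl))).mono
      fun x hx => (mem_product.mp hx).1 |> mem_range.mp
  obtain ⟨⟨a, c⟩, hac, hgood⟩ := exists_forall_notMem_of_card_mul_lt _ hinj hcard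
  simp only [mem_product, mem_range] at hac
  refine ⟨a, hac.1, c, fun l hl => ⟨?_, hgood l (by simpa using hl)⟩⟩
  have hle := (dvd_sum_and_sum_add_le_of_sublist_powSteps hq hl).2
  calc a + q ^ (t + k) * c + l.sum < q ^ (t + k) * (c + 1) := by linarith [hac.1]
    _ ≤ q ^ L := hL' ▸ Nat.mul_le_mul_left _ hac.2

end Cubes

def CloseOn (N : ℕ) (bad : Finset ℕ) (f : ℕ → ℂ) (φ : ℕ → ℝ) (ε : ℝ) : Prop :=
  ∀ n < N, n ∉ bad → ∃ θ : ℝ, |θ| ≤ ε ∧ f n = e (φ n + θ)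

lemma CloseOn.of_abs_sub_le {N : ℕ} {bad : Finset ℕ} {f : ℕ → ℂ} {φ ψ : ℕ → ℝ} {ε ρ : ℝ}
    (h : CloseOn N bad f φ ε) (hψ : ∀ n < N, |φ n - ψ n| ≤ ρ) : CloseOn N bad f ψ (ε + ρ) := by
  intro n hn hbad
  obtain ⟨θ, hθ, hfn⟩ := h n hn hbad
  refine ⟨θ + (φ n - ψ n), (abs_add_le _ _).trans (add_le_add hθ (hψ n hn)), ?_⟩
  rw [hfn]
  ring_nf

def PeriodicModOne (b : ℚ[X]) (N : ℕ) : Prop :=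
  ∀ n : ℕ, ∃ z : ℤ, b.eval ((n + N : ℕ) : ℚ) - b.eval (n : ℚ) = z

lemma PeriodicModOne.add {b b' : ℚ[X]} {N : ℕ} (h : PeriodicModOne b N)
    (h' : PeriodicModOne b' N) : PeriodicModOne (b + b') N := fun n => by
  obtain ⟨z, hz⟩ := h n
  obtain ⟨z', hz'⟩ := h' n
  refine ⟨z + z', ?_⟩
  push_cast [eval_add] at hz hz' ⊢
  linarith

lemma PeriodicModOne.of_dvd {b : ℚ[X]} {N N' : ℕ} (h : PeriodicModOne b N) (hN : N ∣ N') :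
    PeriodicModOne b N' := by
  obtain ⟨k, rfl⟩ := hN
  induction k with
  | zero => exact fun n => ⟨0, by simp⟩
  | succ k ih =>
    intro n
    obtain ⟨z, hz⟩ := ih n
    obtain ⟨z', hz'⟩ := h (n + N * k)
    refine ⟨z + z', ?_⟩
    rw [show n + N * (k + 1) = n + N * k + N by ring]
    push_cast at hz hz' ⊢
    linarith

lemma exists_int_abs_sub_mul_pow_le {y ε : ℝ} {Q : ℕ} (hε : (Q + 1) * ε < 1) (J : ℕ)
    (h : ∀ j ≤ J, ∃ z : ℤ, |y * Q ^ j - z| ≤ ε) : ∃ z : ℤ, |y - z| * Q ^ J ≤ ε := by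
  induction J with
  | zero => simpa using h 0 le_rfl
  | succ J ih =>
    obtain ⟨z, hz⟩ := ih fun j hj => h j (by omega)
    obtain ⟨z', hz'⟩ := h (J + 1) le_rfl
    have hQ : (0 : ℝ) ≤ Q := Nat.cast_nonneg Q
    have hscale : |y * Q ^ (J + 1) - z * Q ^ (J + 1)| = |y - z| * Q ^ (J + 1) := by
      rw [← sub_mul, abs_mul, abs_of_nonneg (pow_nonneg hQ _)]
    have hz'z : z' = z * (Q : ℤ) ^ (J + 1) := by
      have hlt : |((z' - z * (Q : ℤ) ^ (J + 1) : ℤ) : ℝ)| < 1 := by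
        push_cast
        calc |(z' : ℝ) - z * Q ^ (J + 1)|
            ≤ |z' - y * Q ^ (J + 1)| + |y * Q ^ (J + 1) - z * Q ^ (J + 1)| := abs_sub_le _ _ _
          _ = |y * Q ^ (J + 1) - z'| + Q * (|y - z| * Q ^ J) := by
            rw [abs_sub_comm, hscale, pow_succ]; ring
          _ ≤ ε + Q * ε := add_le_add hz' (mul_le_mul_of_nonneg_left hz hQ)
          _ < 1 := by linarith
      rw [← Int.cast_abs, ← Int.cast_one, Int.cast_lt, Int.abs_lt_one_iff] at hlt
      omega
    refine ⟨z, ?_⟩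
    rw [← hscale]
    simpa [hz'z] using hz'

section Scale

variable {q : ℕ} {f : ℕ → ℂ}

lemma exists_int_near_iterFwdDiff_of_cube (hq : 2 ≤ q) (hQ : QMult q f) (hf : ∀ n, ‖f n‖ = 1)
    {φ : ℕ → ℝ} {ε : ℝ} {L t d a c : ℕ} {bad : Finset ℕ}
    (hclose : CloseOn (q ^ L) bad f φ ε) (hd : d ≠ 0) (ha : a < q ^ t)
    (hcube : ∀ l : List ℕ, l.Sublist (powSteps q t (d + 1)) →
      a + q ^ (t + (d + 1)) * c + l.sum < q ^ L ∧ a + q ^ (t + (d + 1)) * c + l.sum ∉ bad) :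
    ∃ z : ℤ, |iterFwdDiff (powSteps q t (d + 1)) φ (a + q ^ (t + (d + 1)) * c) - z|
      ≤ 2 ^ (d + 1) * ε := by
  set n := a + q ^ (t + (d + 1)) * c
  obtain ⟨κ, hκ⟩ := exists_eq_e_of_norm_eq_one (hf (q ^ t))
  have hnear : ∀ l : List ℕ, l.Sublist (powSteps q (t + 1) d) →
      ∃ z : ℤ, |(Δ_[q ^ t] φ + fun _ => -κ : ℕ → ℝ) (n + l.sum) - z| ≤ 2 * ε := by
    intro l hl
    obtain ⟨hv, hvbad⟩ := hcube l (hl.cons _)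
    obtain ⟨hw, hwbad⟩ := hcube (q ^ t :: l) (hl.cons_cons _)
    obtain ⟨θ, hθ, hfv⟩ := hclose _ hv hvbad
    obtain ⟨θ', hθ', hfw⟩ := hclose _ hw hwbad
    obtain ⟨w, hw⟩ : q ^ (t + 1) ∣ q ^ (t + (d + 1)) * c + l.sum :=
      dvd_add ((pow_dvd_pow q (by omega)).mul_right c)
        (dvd_sum_and_sum_add_le_of_sublist_powSteps hq hl).1
    have hvw : n + l.sum = a + q ^ (t + 1) * w := by rw [← hw]; ring
    have hmul : f (n + l.sum + q ^ t) = f (q ^ t) * f (n + l.sum) := by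
      rw [hvw]; exact hQ.apply_add_pow hq ha w
    rw [List.sum_cons, ← add_assoc, add_right_comm, hmul, hfv, hκ, ← e_add, ← add_assoc] at hfw
    obtain ⟨z, hz⟩ := exists_int_abs_sub_le_of_e_eq hfw
    refine ⟨-z, ?_⟩
    simp only [Pi.add_apply, fwdDiff]
    calc _ = |κ + φ (n + l.sum) - φ (n + l.sum + q ^ t) - z| := by
          rw [← abs_neg]; push_cast; ring_nf
      _ ≤ 2 * ε := by linarith
  obtain ⟨z, hz⟩ := exists_int_abs_iterFwdDiff_sub_le _ n hnear
  refine ⟨z, ?_⟩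
  have hne : powSteps q (t + 1) d ≠ [] := by
    rw [← List.length_pos_iff, length_powSteps]; omega
  rw [iterFwdDiff_add, iterFwdDiff_const hne, add_zero, length_powSteps] at hz
  rw [powSteps_succ, iterFwdDiff_cons, pow_succ]
  linarith

lemma exists_int_iterFwdDiff_phase_eq {P : ℝ[X]} {b₀ : ℚ[X]} {d M t : ℕ}
    (hP : P.natDegree ≤ d + 1) (hb₀ : PeriodicModOne b₀ (q ^ M)) (hMt : M ≤ t) (n : ℕ) :
    ∃ Z : ℤ,
      iterFwdDiff (powSteps q t (d + 1)) (fun v => P.eval (v : ℝ) + ((b₀.eval (v : ℚ) : ℚ) : ℝ)) n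
        = P.coeff (d + 1) * (d + 1).factorial * (powSteps q t (d + 1)).prod + Z := by
  have hb : ∃ Z : ℤ,
      iterFwdDiff (powSteps q t (d + 1)) (fun v => ((b₀.eval (v : ℚ) : ℚ) : ℝ)) n = Z := by
    rw [powSteps_succ, iterFwdDiff_cons]
    refine exists_int_iterFwdDiff_eq (fun v => ?_) _ n
    obtain ⟨z, hz⟩ := hb₀.of_dvd (pow_dvd_pow q hMt) v
    exact ⟨z, by simp only [fwdDiff]; exact_mod_cast hz⟩
  obtain ⟨Z, hZ⟩ := hb
  refine ⟨Z, ?_⟩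
  rw [show (fun v : ℕ => P.eval (v : ℝ) + ((b₀.eval (v : ℚ) : ℚ) : ℝ))
      = (fun v : ℕ => P.eval (v : ℝ)) + fun v : ℕ => ((b₀.eval (v : ℚ) : ℚ) : ℝ) from rfl,
    iterFwdDiff_add, Pi.add_apply, hZ, iterFwdDiff_eval _ (by simpa using hP), length_powSteps]

lemma exists_int_near_leading_coeff_at_scale (hq : 2 ≤ q) (hQ : QMult q f)
    (hf : ∀ n, ‖f n‖ = 1) {P : ℝ[X]} {b₀ : ℚ[X]} {d M L t : ℕ} {ε δ : ℝ} {bad : Finset ℕ}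
    (hd : d ≠ 0) (hP : P.natDegree ≤ d + 1) (hb₀ : PeriodicModOne b₀ (q ^ M))
    (hbad : (#bad : ℝ) ≤ δ * q ^ L) (hδ : δ * (2 * q) ^ (d + 1) < 1)
    (hclose : CloseOn (q ^ L) bad f (fun n => P.eval (n : ℝ) + ((b₀.eval (n : ℚ) : ℚ) : ℝ)) ε)
    (hMt : M ≤ t) (htL : t + (d + 1) ≤ L) :
    ∃ z : ℤ, |P.coeff (d + 1) * (d + 1).factorial * q ^ (List.range' t (d + 1)).sum - z|
      ≤ 2 ^ (d + 1) * ε := by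
  obtain ⟨a, ha, c, hcube⟩ := exists_cube_avoiding hq hbad hδ htL
  obtain ⟨z, hz⟩ := exists_int_near_iterFwdDiff_of_cube hq hQ hf hclose hd ha hcube
  obtain ⟨Z, hZ⟩ := exists_int_iterFwdDiff_phase_eq hP hb₀ hMt (a + q ^ (t + (d + 1)) * c)
  refine ⟨z - Z, ?_⟩
  rw [hZ, prod_powSteps] at hz
  push_cast at hz ⊢
  convert hz using 2
  ring

lemma exists_int_near_leading_coeff (hq : 2 ≤ q) (hQ : QMult q f)
    (hf : ∀ n, ‖f n‖ = 1) {P : ℝ[X]} {b₀ : ℚ[X]} {d M L : ℕ} {ε δ : ℝ} {bad : Finset ℕ}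
    (hd : d ≠ 0) (hP : P.natDegree ≤ d + 1) (hb₀ : PeriodicModOne b₀ (q ^ M))
    (hbad : (#bad : ℝ) ≤ δ * q ^ L) (hδ : δ * (2 * q) ^ (d + 1) < 1)
    (hclose : CloseOn (q ^ L) bad f (fun n => P.eval (n : ℝ) + ((b₀.eval (n : ℚ) : ℚ) : ℝ)) ε)
    (hε : ((q ^ (d + 1) : ℕ) + 1) * (2 ^ (d + 1) * ε) < 1) (hL : M + (d + 1) ≤ L) :
    ∃ z : ℤ, |P.coeff (d + 1) * (d + 1).factorial * q ^ (List.range' M (d + 1)).sum - z|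
      * ((q ^ (d + 1) : ℕ) : ℝ) ^ (L - (d + 1) - M) ≤ 2 ^ (d + 1) * ε := by
  refine exists_int_abs_sub_mul_pow_le hε _ fun j hj => ?_
  obtain ⟨z, hz⟩ := exists_int_near_leading_coeff_at_scale hq hQ hf hd hP hb₀ hbad hδ hclose
    (Nat.le_add_right M j) (by omega)
  refine ⟨z, ?_⟩
  rw [sum_range'_add, pow_add, pow_mul] at hz
  push_cast
  convert hz using 3
  ring

end Scale

lemma pow_dvd_of_pow_add_dvd_mul {q a j c : ℕ} (hj : 0 < j) (h : q ^ (a + j) ∣ j * c) :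
    q ^ a ∣ c := by
  rcases Nat.eq_zero_or_pos c with rfl | hc
  · exact dvd_zero _
  rcases Nat.eq_zero_or_pos q with rfl | hq
  · rw [zero_pow (by omega), zero_dvd_iff] at h
    exact absurd h (by positivity)
  rw [← Nat.factorization_le_iff_dvd (by positivity) hc.ne']
  intro p
  have hp := (Nat.factorization_le_iff_dvd (by positivity) (by positivity)).mpr h p
  have hjp := Nat.factorization_lt p hj.ne'
  simp only [Nat.factorization_pow, Nat.factorization_mul hj.ne' hc.ne', Finsupp.smul_apply,
    Finsupp.add_apply, smul_eq_mul] at hp ⊢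
  -- `p ^ v ∣ j` forces `v < j ≤ j * (q.factorization p)` as soon as `p ∣ q`
  rcases Nat.eq_zero_or_pos (q.factorization p) with h0 | h0
  · simp [h0]
  · nlinarith

lemma pow_dvd_choose_pow {q a j t : ℕ} (hj : 0 < j) (ht : a + j ≤ t) :
    q ^ a ∣ (q ^ t).choose j := by
  refine pow_dvd_of_pow_add_dvd_mul hj ((pow_dvd_pow q ht).trans ?_)
  obtain ⟨k, rfl⟩ := Nat.exists_eq_add_of_lt hj
  rcases Nat.eq_zero_or_pos (q ^ t) with h0 | hpos
  · simp [h0]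
  obtain ⟨N, hN⟩ := Nat.exists_eq_add_of_lt hpos
  rw [hN, zero_add, zero_add, mul_comm, ← Nat.add_one_mul_choose_eq]
  exact dvd_mul_right _ _

lemma choose_add_pow_modEq {q a r t : ℕ} (ht : a + r ≤ t) (n : ℕ) :
    (n + q ^ t).choose r ≡ n.choose r [MOD q ^ a] := by
  rw [Nat.add_choose_eq, Finset.Nat.sum_antidiagonal_eq_sum_range_succ_mk, sum_range_succ,
    Nat.sub_self, Nat.choose_zero_right, mul_one]
  refine ((Nat.modEq_zero_iff_dvd.mpr (dvd_sum fun i hi => ?_)).add_right _).trans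
    (by rw [zero_add])
  rw [mem_range] at hi
  exact (pow_dvd_choose_pow (by omega) (by omega)).mul_left _

noncomputable def scaledChoose (z : ℤ) (N r : ℕ) : ℚ[X] :=
  C ((z : ℚ) / (N * r.factorial)) * descPochhammer ℚ r

lemma eval_scaledChoose (z : ℤ) (N r n : ℕ) :
    (scaledChoose z N r).eval (n : ℚ) = z * n.choose r / N := by
  have := r.factorial_ne_zero
  rw [scaledChoose, eval_mul, eval_C, descPochhammer_eval_eq_descFactorial,
    Nat.descFactorial_eq_factorial_mul_choose]
  push_cast
  field_simp

lemma coeff_scaledChoose (z : ℤ) (N r : ℕ) :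
    (scaledChoose z N r).coeff r = z / (N * r.factorial) := by
  have h := (monic_descPochhammer ℚ r).coeff_natDegree
  rw [descPochhammer_natDegree] at h
  rw [scaledChoose, coeff_C_mul, h, mul_one]

lemma natDegree_scaledChoose_le (z : ℤ) (N r : ℕ) : (scaledChoose z N r).natDegree ≤ r :=
  (natDegree_C_mul_le _ _).trans (descPochhammer_natDegree ℚ r).le

lemma periodicModOne_scaledChoose {q : ℕ} (hq : 0 < q) (z : ℤ) (a r : ℕ) :
    PeriodicModOne (scaledChoose z (q ^ a) r) (q ^ (a + r)) := fun n => by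
  obtain ⟨D, hD⟩ := (Nat.modEq_iff_dvd.mp (choose_add_pow_modEq le_rfl n).symm)
  refine ⟨z * D, ?_⟩
  have hqa : ((q : ℚ) ^ a) ≠ 0 := by positivity
  rw [eval_scaledChoose, eval_scaledChoose]
  have hD' : ((n + q ^ (a + r)).choose r : ℚ) - n.choose r = q ^ a * D := by exact_mod_cast hD
  push_cast
  field_simp
  linear_combination z * hD'

lemma natDegree_sub_C_mul_X_pow_coeff_le {R : Type*} [Ring R] {P : R[X]} {d : ℕ}
    (hP : P.natDegree ≤ d + 1) : (P - C (P.coeff (d + 1)) * X ^ (d + 1)).natDegree ≤ d := by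
  refine natDegree_le_iff_coeff_eq_zero.mpr fun i hi => ?_
  rw [coeff_sub, coeff_C_mul_X_pow]
  split_ifs with h
  · rw [h, sub_self]
  · rw [coeff_eq_zero_of_natDegree_lt (by omega), sub_zero]

lemma CloseOn.exists_natDegree_le {N : ℕ} {bad : Finset ℕ} {f : ℕ → ℂ} {P : ℝ[X]}
    {b₀ b₁ : ℚ[X]} {d : ℕ} {ε ρ : ℝ}
    (h : CloseOn N bad f (fun n => P.eval (n : ℝ) + ((b₀.eval (n : ℚ) : ℚ) : ℝ)) ε)
    (hP : P.natDegree ≤ d + 1) (hb₁ : b₁.natDegree ≤ d + 1)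
    (hρ : ∀ n < N, |P.coeff (d + 1) - b₁.coeff (d + 1)| * (n : ℝ) ^ (d + 1) ≤ ρ) :
    ∃ P' : ℝ[X], P'.natDegree ≤ d ∧
      CloseOn N bad f (fun n => P'.eval (n : ℝ) + (((b₀ + b₁).eval (n : ℚ) : ℚ) : ℝ)) (ε + ρ) := by
  set R := P - b₁.map (algebraMap ℚ ℝ)
  have hR : R.natDegree ≤ d + 1 :=
    (natDegree_sub_le _ _).trans (max_le hP (natDegree_map_le.trans hb₁))
  have hRc : R.coeff (d + 1) = P.coeff (d + 1) - b₁.coeff (d + 1) := by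
    simp [R, coeff_map]
  refine ⟨R - C (R.coeff (d + 1)) * X ^ (d + 1), natDegree_sub_C_mul_X_pow_coeff_le hR,
    h.of_abs_sub_le fun n hn => ?_⟩
  have hb₁n : (b₁.map (algebraMap ℚ ℝ)).eval (n : ℝ) = ((b₁.eval (n : ℚ) : ℚ) : ℝ) := by
    simpa using eval_natCast_map (algebraMap ℚ ℝ) b₁ n
  calc _ = |R.coeff (d + 1) * (n : ℝ) ^ (d + 1)| := by
        simp only [R, eval_add, eval_sub, eval_mul, eval_C, eval_pow, eval_X, hb₁n, Rat.cast_add]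
        ring_nf
    _ ≤ ρ := by
        rw [abs_mul, abs_of_nonneg (by positivity : (0 : ℝ) ≤ (n : ℝ) ^ (d + 1)), hRc]
        exact hρ n hn

lemma abs_sub_div_mul_pow_le {c ε' : ℝ} {z : ℤ} {q r E J L n : ℕ} (hq : 0 < q)
    (hz : |c * r.factorial * q ^ E - z| * ((q ^ r : ℕ) : ℝ) ^ J ≤ ε')
    (hL : r * L ≤ E + r * J + r * r) (hn : n < q ^ L) :
    |c - z / (q ^ E * r.factorial)| * (n : ℝ) ^ r ≤ ε' * q ^ (r * r) := by
  have hQ : (0 : ℝ) < q ^ E := by positivity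
  have hD : (1 : ℝ) ≤ r.factorial := by exact_mod_cast r.factorial_pos
  have hn' : (n : ℝ) ^ r ≤ q ^ E * ((q ^ r : ℕ) : ℝ) ^ J * q ^ (r * r) := by
    calc (n : ℝ) ^ r ≤ ((q : ℝ) ^ L) ^ r := by gcongr; exact_mod_cast hn.le
      _ ≤ q ^ (E + r * J + r * r) := by
        rw [← pow_mul]; exact pow_le_pow_right₀ (by exact_mod_cast hq) (by linarith)
      _ = _ := by push_cast; ring
  have hsplit : c - z / (q ^ E * r.factorial)
      = (c * r.factorial * q ^ E - z) / (q ^ E * r.factorial) := by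
    field_simp
  calc |c - z / (q ^ E * r.factorial)| * (n : ℝ) ^ r
      ≤ |c * r.factorial * q ^ E - z| / (q ^ E * r.factorial)
          * (q ^ E * ((q ^ r : ℕ) : ℝ) ^ J * q ^ (r * r)) := by
        rw [hsplit, abs_div, abs_of_pos (by positivity : (0 : ℝ) < q ^ E * r.factorial)]; gcongr
    _ = |c * r.factorial * q ^ E - z| * ((q ^ r : ℕ) : ℝ) ^ J * q ^ (r * r) / r.factorial := by
        field_simp
    _ ≤ |c * r.factorial * q ^ E - z| * ((q ^ r : ℕ) : ℝ) ^ J * q ^ (r * r) :=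
        div_le_self (by positivity) hD
    _ ≤ ε' * q ^ (r * r) := by gcongr

section Induction

variable {q : ℕ}

def PolyRigidity (q d M : ℕ) : Prop :=
  ∃ ε₀ > (0 : ℝ), ∃ δ₀ > (0 : ℝ), ∃ L₀ C₁ : ℕ, ∃ C₂ > (0 : ℝ),
    ∀ f : ℕ → ℂ, QMult q f → (∀ n, ‖f n‖ = 1) →
    ∀ (P : ℝ[X]) (b₀ : ℚ[X]), P.natDegree ≤ d → PeriodicModOne b₀ (q ^ M) →
    ∀ ε δ : ℝ, ε < ε₀ → δ < δ₀ → ∀ L, L₀ ≤ L → ∀ bad : Finset ℕ, (#bad : ℝ) ≤ δ * q ^ L →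
    CloseOn (q ^ L) bad f (fun n => P.eval (n : ℝ) + ((b₀.eval (n : ℚ) : ℚ) : ℝ)) ε →
    ∃ (α β : ℝ) (b : ℚ[X]) (m : ℕ), m ≤ C₁ ∧ PeriodicModOne b (q ^ m) ∧
      CloseOn (q ^ L) bad f (fun n => α * n + β + ((b.eval (n : ℚ) : ℚ) : ℝ)) (C₂ * ε)

lemma polyRigidity_one (M : ℕ) : PolyRigidity q 1 M := by
  refine ⟨1, one_pos, 1, one_pos, 0, M, 1, one_pos, ?_⟩
  intro f _ _ P b₀ hP hb₀ ε δ _ _ L _ bad _ hclose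
  have hlin : ∀ x : ℝ, P.eval x = P.coeff 1 * x + P.coeff 0 := fun x => by
    conv_lhs => rw [eq_X_add_C_of_natDegree_le_one hP]
    simp
  refine ⟨P.coeff 1, P.coeff 0, b₀, M, le_rfl, hb₀, fun n hn hnb => ?_⟩
  obtain ⟨θ, hθ, hfn⟩ := hclose n hn hnb
  exact ⟨θ, by rwa [one_mul], by simp only [hfn, hlin]⟩

lemma PolyRigidity.succ (hq : 2 ≤ q) {d : ℕ} (hd : d ≠ 0) (ih : ∀ M, PolyRigidity q d M)
    (M : ℕ) : PolyRigidity q (d + 1) M := by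
  set E := (List.range' M (d + 1)).sum
  have hME : (d + 1) * M ≤ E := mul_le_sum_range' M (d + 1)
  -- the correction made below is periodic mod 1 with period `q ^ (E + (d + 1))`
  obtain ⟨ε₀, hε₀, δ₀, hδ₀, L₀, C₁, C₂, hC₂, H⟩ := ih (E + (d + 1))
  set γ : ℝ := 1 + 2 ^ (d + 1) * (q : ℝ) ^ ((d + 1) * (d + 1))
  refine ⟨min (ε₀ / γ) (1 / (2 ^ (d + 1) * (q ^ (d + 1) + 1))), by positivity,
    min δ₀ (1 / (2 * q) ^ (d + 1)), by positivity, max L₀ (M + (d + 1)), C₁, C₂ * γ,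
    by positivity, ?_⟩
  intro f hQ hf P b₀ hP hb₀ ε δ hε hδ L hL bad hbad hclose
  rw [lt_min_iff, lt_div_iff₀ (by positivity), lt_div_iff₀ (by positivity)] at hε
  rw [lt_min_iff, lt_div_iff₀ (by positivity)] at hδ
  rw [max_le_iff] at hL
  obtain ⟨z, hz⟩ := exists_int_near_leading_coeff hq hQ hf hd hP hb₀ hbad hδ.2 hclose
    (by push_cast; linarith) hL.2
  set J := L - (d + 1) - M
  have hρ : ∀ n < q ^ L,
      |P.coeff (d + 1) - ((scaledChoose z (q ^ E) (d + 1)).coeff (d + 1) : ℝ)| * (n : ℝ) ^ (d + 1)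
        ≤ 2 ^ (d + 1) * ε * q ^ ((d + 1) * (d + 1)) := fun n hn => by
    rw [coeff_scaledChoose]
    push_cast
    refine abs_sub_div_mul_pow_le (by omega) hz ?_ hn
    have hLJ : (d + 1) * L = (d + 1) * M + (d + 1) * J + (d + 1) * (d + 1) := by
      rw [← mul_add, ← mul_add]; congr 1; omega
    omega
  obtain ⟨P', hP', hclose'⟩ := hclose.exists_natDegree_le hP (natDegree_scaledChoose_le _ _ _) hρ
  have hM : M ≤ E + (d + 1) := (Nat.le_mul_of_pos_left M (by omega : 0 < d + 1)).trans (by omega)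
  have hb : PeriodicModOne (b₀ + scaledChoose z (q ^ E) (d + 1)) (q ^ (E + (d + 1))) :=
    (hb₀.of_dvd (pow_dvd_pow q hM)).add (periodicModOne_scaledChoose (by omega) z E (d + 1))
  obtain ⟨α, β, b, m, hm, hbm, hfin⟩ := H f hQ hf P' _ hP' hb _ δ (by linarith [hε.1]) hδ.1 L
    hL.1 bad hbad hclose'
  refine ⟨α, β, b, m, hm, hbm, ?_⟩
  convert hfin using 1
  ring

lemma polyRigidity (hq : 2 ≤ q) {d : ℕ} (hd : 1 ≤ d) (M : ℕ) : PolyRigidity q d M := by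
  induction d, hd using Nat.le_induction generalizing M with
  | base => exact polyRigidity_one M
  | succ d hd ih => exact PolyRigidity.succ hq (by omega) ih M

end Induction

attribute [local instance] Classical.propDecidable

/-- Rigidity of pretentious `q`-multiplicative sequences: if `f`
is close to a polynomial phase `e(p(n))` of degree `< s` on most of `[0, q^L)`, then
`f` is close, on most of `[0, q^L)`, to `e(αn + β + b(n))` for a rational polynomial
`b` whose reduction mod 1 is periodic with period a power of `q` at most `q^{C₁}`. -/
theorem stmt12 (q s : ℕ) (hq : 2 ≤ q) (hs : 2 ≤ s) :
    ∃ ε₀ > (0 : ℝ), ∃ δ₀ > (0 : ℝ), ∃ L₀ : ℕ, 0 < L₀ ∧ ∃ C₁ : ℕ, ∃ C₂ > (0 : ℝ),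
      ∀ f : ℕ → ℂ, QMult q f → (∀ n, ‖f n‖ = 1) →
        ∀ p : Polynomial ℝ, p.natDegree < s →
          ∀ ε δ : ℝ, 0 < ε → ε < ε₀ → 0 < δ → δ < δ₀ →
            ∀ L : ℕ, L₀ ≤ L →
              (((Finset.range (q ^ L)).filter fun n =>
                  ¬ ∃ θ : ℝ, |θ| ≤ ε ∧ f n = e (p.eval (n : ℝ) + θ)).card : ℝ)
                ≤ δ * q ^ L →
              ∃ α β : ℝ, ∃ b : Polynomial ℚ, ∃ m : ℕ, m ≤ C₁ ∧
                (∀ n : ℕ, Int.fract (b.eval ((n : ℚ) + q ^ m)) = Int.fract (b.eval (n : ℚ))) ∧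
                (((Finset.range (q ^ L)).filter fun n =>
                    ¬ ∃ θ : ℝ, |θ| ≤ C₂ * ε ∧
                      f n = e (α * n + β + ((b.eval (n : ℚ) : ℚ) : ℝ) + θ)).card : ℝ)
                  ≤ δ * q ^ L := by
  obtain ⟨ε₀, hε₀, δ₀, hδ₀, L₀, C₁, C₂, hC₂, H⟩ := polyRigidity hq (d := s - 1) (by omega) 0
  refine ⟨ε₀, hε₀, δ₀, hδ₀, L₀ + 1, L₀.succ_pos, C₁, C₂, hC₂, ?_⟩
  intro f hQ hf p hp ε δ _ hε _ hδ L hL hbad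
  set bad := (range (q ^ L)).filter fun n => ¬ ∃ θ : ℝ, |θ| ≤ ε ∧ f n = e (p.eval (n : ℝ) + θ)
  have hclose : CloseOn (q ^ L) bad f
      (fun n => p.eval (n : ℝ) + (((0 : ℚ[X]).eval (n : ℚ) : ℚ) : ℝ)) ε := fun n hn hnb => by
      by_contra h
      exact hnb (mem_filter.mpr ⟨mem_range.mpr hn, by simpa using h⟩)
  obtain ⟨α, β, b, m, hm, hb, hfin⟩ := H f hQ hf p 0 (by omega) (fun n => ⟨0, by simp⟩) ε δ hε hδ
    L (by omega) bad hbad hclose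
  refine ⟨α, β, b, m, hm, fun n => Int.fract_eq_fract.mpr ?_, ?_⟩
  · obtain ⟨z, hz⟩ := hb n
    exact ⟨z, by exact_mod_cast hz⟩
  · refine le_trans ?_ hbad
    gcongr
    intro n hn
    rw [mem_filter] at hn
    by_contra hnb
    exact hn.2 (hfin n (mem_range.mp hn.1) hnb)
end
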